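/- Let X = [0,1] ∪ [2,3], let f_1(x) = x² on [0,1] and f_1(x) = (x−2)^{1/2} + 2 on [2,3], let f_2(x) = x+2 on [0,1] and f_2(x) = x−2 on [2,3], and let F = Γ(f_1) ∪ Γ(f_2). Then the Mahavier dynamical system (X_F^+, σ_F^+) is not transitive. -/

import Mathlib

open Set

/-- `X = [0,1] ∪ [2,3]`. -/
def XS : Set ℝ := Icc 0 1 ∪ Icc 2 3

/-- `f₁(x) = x²` on `[0,1]`, `f₁(x) = (x-2)^{1/2} + 2` on `[2,3]`. -/
noncomputable def f₁ (x : ℝ) : ℝ := if x ≤ 1 then x ^ 2 else Real.sqrt (x - 2) + 2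

/-- `f₂(x) = x + 2` on `[0,1]`, `f₂(x) = x - 2` on `[2,3]`. -/
noncomputable def f₂ (x : ℝ) : ℝ := if x ≤ 1 then x + 2 else x - 2

/-- `F = Γ(f₁) ∪ Γ(f₂)` as a relation on `X`. -/
noncomputable def Frel : Set (ℝ × ℝ) :=
  {p | p.1 ∈ XS ∧ (p.2 = f₁ p.1 ∨ p.2 = f₂ p.1)}

/-- The Mahavier product `X_F^+`. -/
def MahavierPlus (F : Set (ℝ × ℝ)) : Set (ℕ → ℝ) :=
  {x | ∀ i : ℕ, (x i, x (i + 1)) ∈ F}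

/-- The shift map on sequences. -/
def shiftMap (x : ℕ → ℝ) : ℕ → ℝ := fun i => x (i + 1)

/-!
Folding `[2, 3]` onto `[0, 1]` by `x ↦ x - 2` turns every step of `F` into squaring, taking a
square root, or the identity. Hence the folded coordinates of a point of `X_F^+` all share an
iterated square with its first coordinate. For `u ∈ [0, 1]` the iterated squares
`u, u ^ 2, u ^ 4, …` jump over the gap `(u ^ 4, u ^ 2)`, so no orbit starting in `(3/4, 4/5)`
ever visits `(9/20, 11/20)`.
-/

def PowTwoRelated {M : Type*} [Monoid M] (u v : M) : Prop :=
  ∃ a b : ℕ, u ^ 2 ^ a = v ^ 2 ^ b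

namespace PowTwoRelated

variable {M : Type*} [Monoid M]

theorem refl (u : M) : PowTwoRelated u u := ⟨0, 0, rfl⟩

theorem trans {u v w : M} (huv : PowTwoRelated u v) (hvw : PowTwoRelated v w) :
    PowTwoRelated u w := by
  obtain ⟨a, b, hab⟩ := huv
  obtain ⟨c, d, hcd⟩ := hvw
  refine ⟨a + c, d + b, ?_⟩
  calc u ^ 2 ^ (a + c) = (u ^ 2 ^ a) ^ 2 ^ c := by rw [pow_add, pow_mul]
    _ = (v ^ 2 ^ c) ^ 2 ^ b := by rw [hab, ← pow_mul, ← pow_mul, mul_comm]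
    _ = w ^ 2 ^ (d + b) := by rw [hcd, pow_add, pow_mul]

theorem symm {u v : M} (h : PowTwoRelated u v) : PowTwoRelated v u :=
  let ⟨a, b, hab⟩ := h
  ⟨b, a, hab.symm⟩

theorem sq_left (u : M) : PowTwoRelated (u ^ 2) u := ⟨0, 1, by simp⟩

theorem exists_eq_pow_or_eq_pow {R : Type*} [Semiring R] [LinearOrder R] [IsStrictOrderedRing R]
    {u v : R} (hu : 0 ≤ u) (hv : 0 ≤ v)
    (h : PowTwoRelated u v) : ∃ k : ℕ, u = v ^ 2 ^ k ∨ v = u ^ 2 ^ k := by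
  obtain ⟨a, b, hab⟩ := h
  rcases le_total a b with hle | hle
  · obtain ⟨k, rfl⟩ := Nat.exists_eq_add_of_le hle
    refine ⟨k, Or.inl ((pow_left_inj₀ (n := 2 ^ a) hu (by positivity) (by positivity)).mp ?_)⟩
    rw [hab, ← pow_mul, ← pow_add, add_comm]
  · obtain ⟨k, rfl⟩ := Nat.exists_eq_add_of_le hle
    refine ⟨k, Or.inr ((pow_left_inj₀ (n := 2 ^ b) hv (by positivity) (by positivity)).mp ?_)⟩
    rw [← hab, ← pow_mul, ← pow_add, add_comm]

theorem not_of_pow_four_lt_of_lt_sq {u v : ℝ} (hu₀ : 0 ≤ u) (hu₁ : u ≤ 1)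
    (hv₄ : u ^ 4 < v) (hv₂ : v < u ^ 2) : ¬ PowTwoRelated u v := by
  intro h
  have hv₀ : 0 ≤ v := (pow_nonneg hu₀ 4).trans hv₄.le
  have hu_le_sq : u ^ 2 ≤ u := by nlinarith
  obtain ⟨k, hk | hk⟩ := exists_eq_pow_or_eq_pow hu₀ hv₀ h
  · have : v ^ 2 ^ k ≤ v := by
      simpa using pow_le_pow_of_le_one hv₀ (by linarith) (Nat.one_le_two_pow (n := k))
    linarith
  · match k, hk with
    | 0, hk => simp at hk; linarith
    | 1, hk => simp at hk; linarith
    | k + 2, hk =>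
      have : u ^ 2 ^ (k + 2) ≤ u ^ 4 :=
        pow_le_pow_of_le_one hu₀ hu₁
          (Nat.pow_le_pow_right (n := 2) (by norm_num) (by omega : 2 ≤ k + 2))
      linarith

end PowTwoRelated

noncomputable def fold (x : ℝ) : ℝ := if x ≤ 1 then x else x - 2

theorem fold_of_le_one {x : ℝ} (hx : x ≤ 1) : fold x = x := if_pos hx

theorem fold_of_one_lt {x : ℝ} (hx : 1 < x) : fold x = x - 2 := if_neg hx.not_ge

theorem powTwoRelated_fold_of_mem_Frel {p q : ℝ} (h : (p, q) ∈ Frel) :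
    PowTwoRelated (fold p) (fold q) := by
  obtain ⟨⟨hp₀, hp₁⟩ | ⟨hp₂, hp₃⟩, hq | hq⟩ := h
  · obtain rfl : q = p ^ 2 := by simpa [f₁, hp₁] using hq
    rw [fold_of_le_one hp₁, fold_of_le_one (by nlinarith)]
    exact (PowTwoRelated.sq_left p).symm
  · obtain rfl : q = p + 2 := by simpa [f₂, hp₁] using hq
    rw [fold_of_le_one hp₁, fold_of_one_lt (by linarith), add_sub_cancel_right]
    exact PowTwoRelated.refl p
  · obtain rfl : q = √(p - 2) + 2 := by simpa [f₁, show ¬ p ≤ 1 by linarith] using hq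
    rw [fold_of_one_lt (by linarith), fold_of_one_lt (by linarith [Real.sqrt_nonneg (p - 2)]),
      add_sub_cancel_right]
    simpa [Real.sq_sqrt (by linarith : 0 ≤ p - 2)] using PowTwoRelated.sq_left √(p - 2)
  · obtain rfl : q = p - 2 := by simpa [f₂, show ¬ p ≤ 1 by linarith] using hq
    rw [fold_of_one_lt (by linarith), fold_of_le_one (by linarith)]
    exact PowTwoRelated.refl _

theorem powTwoRelated_fold_of_mem_mahavierPlus {x : ℕ → ℝ} (hx : x ∈ MahavierPlus Frel)
    (n : ℕ) : PowTwoRelated (fold (x 0)) (fold (x n)) := by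
  induction n with
  | zero => exact PowTwoRelated.refl _
  | succ n ih => exact ih.trans (powTwoRelated_fold_of_mem_Frel (hx n))

theorem pow_two_pow_mem_mahavierPlus {a : ℝ} (ha₀ : 0 ≤ a) (ha₁ : a ≤ 1) :
    (fun i : ℕ => a ^ 2 ^ i) ∈ MahavierPlus Frel := by
  intro i
  have hai : a ^ 2 ^ i ≤ 1 := pow_le_one₀ ha₀ ha₁
  refine ⟨Or.inl ⟨by positivity, hai⟩, Or.inl ?_⟩
  simp only [f₁, if_pos hai, pow_succ, pow_mul]

theorem shiftMap_iterate_apply (x : ℕ → ℝ) (n i : ℕ) : shiftMap^[n] x i = x (i + n) := by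
  induction n generalizing x with
  | zero => rfl
  | succ n ih => rw [Function.iterate_succ_apply, ih]; rfl

/-- The Mahavier dynamical system `(X_F^+, σ_F^+)` for the relation
`F = Γ(f₁) ∪ Γ(f₂)` (with the square root on `[2,3]`) is not transitive. -/
theorem mahavier_sqrt_not_transitive :
    ¬ (∀ U V : Set (ℕ → ℝ), IsOpen U → IsOpen V →
        (U ∩ MahavierPlus Frel).Nonempty → (V ∩ MahavierPlus Frel).Nonempty →
        ∃ n : ℕ, (shiftMap^[n] '' (U ∩ MahavierPlus Frel) ∩
          (V ∩ MahavierPlus Frel)).Nonempty) := by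
  intro h
  let U : Set (ℕ → ℝ) := (fun x => x 0) ⁻¹' Ioo (3 / 4) (4 / 5)
  let V : Set (ℕ → ℝ) := (fun x => x 0) ⁻¹' Ioo (9 / 20) (11 / 20)
  have hU : (U ∩ MahavierPlus Frel).Nonempty :=
    ⟨_, by norm_num [U], pow_two_pow_mem_mahavierPlus (a := 7 / 9) (by norm_num) (by norm_num)⟩
  have hV : (V ∩ MahavierPlus Frel).Nonempty :=
    ⟨_, by norm_num [V], pow_two_pow_mem_mahavierPlus (a := 1 / 2) (by norm_num) (by norm_num)⟩
  obtain ⟨n, _, ⟨x, ⟨⟨hu₁, hu₂⟩, hx⟩, rfl⟩, ⟨hv₁, hv₂⟩, -⟩ :=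
    h U V (isOpen_Ioo.preimage (continuous_apply 0)) (isOpen_Ioo.preimage (continuous_apply 0))
      hU hV
  dsimp only at hu₁ hu₂ hv₁ hv₂
  rw [shiftMap_iterate_apply, zero_add] at hv₁ hv₂
  have hrel := powTwoRelated_fold_of_mem_mahavierPlus hx n
  rw [fold_of_le_one (by linarith), fold_of_le_one (by linarith)] at hrel
  have hu₄ : x 0 ^ 4 < (4 / 5) ^ 4 := pow_lt_pow_left₀ hu₂ (by linarith) (by norm_num)
  have hu₂' : (3 / 4) ^ 2 < x 0 ^ 2 := pow_lt_pow_left₀ hu₁ (by norm_num) (by norm_num)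
  exact PowTwoRelated.not_of_pow_four_lt_of_lt_sq (by linarith) (by linarith)
    (by linarith) (by linarith) hrel
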